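/- Let W = {w ∈ ℝ² : ‖w‖ ≤ 5}. For every 0 < θ₂ ≤ 1 and 0 < θ₁ ≤ 0.025·θ₂, there exists a nonnegative convex function F : W → ℝ that is 1-Lipschitz and has 1-Lipschitz gradient, such that F((0, θ₂)) = F((θ₁, θ₂)) = 0, and for every horizon T and step size 0 < η < 1, the averaged gradient-descent iterate w_F on F satisfies ‖w_F − (θ₁, θ₂)‖ ≤ 2640/(ηT). (Thus GD converges to the minimizer (θ₁, θ₂) even though (0, θ₂) is a minimizer of F strictly closer to the initialization 0.) -/

import Mathlib

/- STATEMENT 5: GD need not converge to the minimal-norm solution.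
   GD on `F : W → ℝ` (W = closed ball of radius 5 in ℝ²) with step size η starts at
   w⁽¹⁾ = 0, iterates w⁽ᵗ⁺¹⁾ = Π_W(w⁽ᵗ⁾ − η∇F(w⁽ᵗ⁾)), and outputs the average of
   w⁽¹⁾, …, w⁽ᵀ⁾. -/

open MeasureTheory Metric

noncomputable section

abbrev Euc (d : ℕ) := EuclideanSpace ℝ (Fin d)

/-- The point `(x, y) ∈ ℝ²`. -/
def toE2 (x y : ℝ) : Euc 2 := (WithLp.equiv 2 (Fin 2 → ℝ)).symm ![x, y]

/-- Euclidean projection onto the closed ball of radius `R` centered at the origin. -/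
def projB {d : ℕ} (R : ℝ) (w : Euc d) : Euc d := if ‖w‖ ≤ R then w else (R / ‖w‖) • w

/-- `gdIter R η g t` is the `(t+1)`-st iterate `w⁽ᵗ⁺¹⁾` of projected gradient descent
started at `w⁽¹⁾ = 0`, where `g t` is the gradient field used at step `t`. -/
def gdIter {d : ℕ} (R η : ℝ) (g : ℕ → Euc d → Euc d) : ℕ → Euc d
  | 0 => 0
  | t + 1 => projB R (gdIter R η g t - η • g t (gdIter R η g t))

/-- The averaged iterate `(1/T) ∑_{t=1}^T w⁽ᵗ⁾`. -/
def gdAvg {d : ℕ} (R η : ℝ) (g : ℕ → Euc d → Euc d) (T : ℕ) : Euc d :=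
  (T : ℝ)⁻¹ • ∑ t ∈ Finset.range T, gdIter R η g t

/-- The output of gradient descent on the single function `F`, projected onto the
ball of radius 5, after `T` steps with step size `η`. -/
def gdOut (F : Euc 2 → ℝ) (η : ℝ) (T : ℕ) : Euc 2 :=
  gdAvg 5 η (fun _ w => gradient F w) T


/-! Take `F (x, y) = ((θ₂ - x - y)⁺ ^ 2 + (x - θ₁)⁺ ^ 2 + (θ₂ - y)⁺ ^ 2) / 80`. Started at `0`,
gradient descent with step `η` stays in the box `[0, θ₁ + θ₂] × [0, θ₂]`, so the projection onto
the ball never acts, and each step moves by `ε = η / 40` times the hinge values. The gap `θ₂ - y`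
shrinks by at most the factor `1 - 2ε` per step, so it stays `≥ θ₂ / 2` for the first `1 / (4ε)`
steps; meanwhile the hinge `(θ₂ - x - y)⁺` pushes `x` up by at least `εθ₂ / 4` per step, so
`x ≥ θ₁` from step `τ = ⌈1 / (4ε)⌉` on. After that the hinge cancels out of
`(x - θ₁) + (θ₂ - y)`, which then contracts by `1 - ε`. Hence the `t`-th iterate is within
`2 (1 - ε) ^ (t - τ)` of `(θ₁, θ₂)`, and averaging gives `(2τ + 2 / ε) / T ≤ 3 / (εT) = 120 / (ηT)`.
-/

open Finset
open scoped RealInnerProductSpace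

lemma abs_posPart_sq_sub_le (s t : ℝ) : |t⁺ ^ 2 - s⁺ ^ 2 - 2 * s⁺ * (t - s)| ≤ (t - s) ^ 2 := by
  rcases le_total 0 s with hs | hs <;> rcases le_total 0 t with ht | ht <;>
    simp only [posPart_of_nonneg, posPart_of_nonpos, hs, ht] <;>
    rw [abs_le] <;> constructor <;> nlinarith

lemma hasDerivAt_posPart_sq (s : ℝ) : HasDerivAt (fun t : ℝ => t⁺ ^ 2) (2 * s⁺) s := by
  rw [hasDerivAt_iff_isLittleO]
  refine Asymptotics.IsBigO.trans_isLittleO ?_ (Asymptotics.isLittleO_pow_sub_sub s one_lt_two)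
  refine Asymptotics.IsBigO.of_bound 1 (Filter.Eventually.of_forall fun t => ?_)
  simpa [mul_comm] using abs_posPart_sq_sub_le s t

lemma convexOn_posPart_sq : ConvexOn ℝ Set.univ (fun t : ℝ => t⁺ ^ 2) :=
  ((convexOn_id convex_univ).sup (convexOn_const 0 convex_univ)).pow
    (fun t _ => posPart_nonneg t) 2

lemma abs_posPart_sub_posPart_le (a b : ℝ) : |a⁺ - b⁺| ≤ |a - b| :=
  abs_max_sub_max_le_abs a b 0

section InnerProductSpace

variable {E : Type*} [NormedAddCommGroup E] [InnerProductSpace ℝ E]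

lemma convexOn_posPart_inner_add_sq (a : E) (b : ℝ) :
    ConvexOn ℝ Set.univ (fun w : E => (⟪a, w⟫ + b)⁺ ^ 2) :=
  convexOn_posPart_sq.comp_affineMap ((innerₛₗ ℝ a).toAffineMap + AffineMap.const ℝ E b)

lemma hasFDerivAt_posPart_inner_add_sq (a : E) (b : ℝ) (w : E) :
    HasFDerivAt (fun v : E => (⟪a, v⟫ + b)⁺ ^ 2) ((2 * (⟪a, w⟫ + b)⁺) • innerSL ℝ a) w :=
  (hasDerivAt_posPart_sq _).comp_hasFDerivAt w ((innerSL ℝ a).hasFDerivAt.add_const b)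

end InnerProductSpace

lemma gdIter_eq_iterate {d : ℕ} {R η : ℝ} {g : Euc d → Euc d} {S : Set (Euc d)} (h₀ : 0 ∈ S)
    (hS : S ⊆ closedBall 0 R) (hmaps : Set.MapsTo (fun w => w - η • g w) S S) (t : ℕ) :
    gdIter R η (fun _ => g) t = (fun w => w - η • g w)^[t] 0 := by
  induction t with
  | zero => rfl
  | succ t ih =>
    have hmem := hmaps (hmaps.iterate t h₀)
    rw [gdIter, ih, Function.iterate_succ_apply', projB,
      if_pos (mem_closedBall_zero_iff.1 (hS hmem))]

lemma sum_range_pow_sub_le {r : ℝ} (hr₀ : 0 ≤ r) (hr : r < 1) (τ T : ℕ) :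
    ∑ t ∈ range T, r ^ (t - τ) ≤ τ + (1 - r)⁻¹ :=
  calc ∑ t ∈ range T, r ^ (t - τ)
      ≤ ∑ t ∈ range (τ + T), r ^ (t - τ) :=
        sum_le_sum_of_subset_of_nonneg (range_mono (Nat.le_add_left T τ))
          fun _ _ _ => pow_nonneg hr₀ _
    _ = τ + ∑ k ∈ range T, r ^ k := by
        rw [sum_range_add, sum_congr rfl fun t ht => by
          rw [Nat.sub_eq_zero_of_le (mem_range.1 ht).le, pow_zero]]
        simp
    _ ≤ τ + (1 - r)⁻¹ := by
        gcongr
        rw [← mul_le_mul_iff_of_pos_right (sub_pos.2 hr), inv_mul_cancel₀ (sub_pos.2 hr).ne']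
        linarith [geom_sum_mul r T, pow_nonneg hr₀ T]

lemma norm_inv_smul_sum_sub_le {E : Type*} [SeminormedAddCommGroup E] [NormedSpace ℝ E]
    (w : ℕ → E) (p : E) {T : ℕ} (hT : T ≠ 0) :
    ‖(T : ℝ)⁻¹ • ∑ t ∈ range T, w t - p‖ ≤ (T : ℝ)⁻¹ * ∑ t ∈ range T, ‖w t - p‖ := by
  have hp : (T : ℝ)⁻¹ • ∑ _t ∈ range T, p = p := by
    rw [sum_const, card_range, ← Nat.cast_smul_eq_nsmul ℝ, smul_smul,
      inv_mul_cancel₀ (Nat.cast_ne_zero.2 hT), one_smul]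
  conv_lhs =>
    rw [← hp, ← smul_sub, ← sum_sub_distrib, norm_smul, Real.norm_of_nonneg (by positivity)]
  gcongr
  exact norm_sum_le (range T) fun t => w t - p

@[simp] lemma toE2_apply_zero (x y : ℝ) : toE2 x y 0 = x := rfl

@[simp] lemma toE2_apply_one (x y : ℝ) : toE2 x y 1 = y := rfl

lemma inner_toE2 (a b : ℝ) (w : Euc 2) : ⟪toE2 a b, w⟫ = a * w 0 + b * w 1 := by
  simp [toE2, PiLp.inner_apply, Fin.sum_univ_two, mul_comm]

lemma abs_apply_le_norm (w : Euc 2) (i : Fin 2) : |w i| ≤ ‖w‖ :=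
  PiLp.norm_apply_le w i

lemma norm_le_abs_add_abs (w : Euc 2) : ‖w‖ ≤ |w 0| + |w 1| := by
  have h := PiLp.norm_sq_eq_of_L2 (fun _ : Fin 2 => ℝ) w
  rw [Fin.sum_univ_two, Real.norm_eq_abs, Real.norm_eq_abs] at h
  nlinarith [norm_nonneg w, abs_nonneg (w 0), abs_nonneg (w 1)]

def hingeLoss (θ₁ θ₂ : ℝ) (w : Euc 2) : ℝ :=
  ((θ₂ - w 0 - w 1)⁺ ^ 2 + (w 0 - θ₁)⁺ ^ 2 + (θ₂ - w 1)⁺ ^ 2) / 80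

lemma hingeLoss_eq_inner (θ₁ θ₂ : ℝ) (w : Euc 2) : hingeLoss θ₁ θ₂ w =
    ((⟪toE2 (-1) (-1), w⟫ + θ₂)⁺ ^ 2 + (⟪toE2 1 0, w⟫ + -θ₁)⁺ ^ 2
      + (⟪toE2 0 (-1), w⟫ + θ₂)⁺ ^ 2) / 80 := by
  simp only [hingeLoss, inner_toE2]
  ring_nf

lemma hingeLoss_nonneg (θ₁ θ₂ : ℝ) (w : Euc 2) : 0 ≤ hingeLoss θ₁ θ₂ w := by
  unfold hingeLoss
  positivity

lemma hingeLoss_toE2_eq_zero {θ₁ θ₂ x : ℝ} (hx : 0 ≤ x) (hxθ : x ≤ θ₁) :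
    hingeLoss θ₁ θ₂ (toE2 x θ₂) = 0 := by
  simp [hingeLoss, posPart_eq_zero.2 (sub_nonpos.2 hxθ), hx]

lemma convexOn_hingeLoss (θ₁ θ₂ : ℝ) : ConvexOn ℝ Set.univ (hingeLoss θ₁ θ₂) := by
  have h := (((convexOn_posPart_inner_add_sq (toE2 (-1) (-1)) θ₂).add
    (convexOn_posPart_inner_add_sq (toE2 1 0) (-θ₁))).add
    (convexOn_posPart_inner_add_sq (toE2 0 (-1)) θ₂)).smul (c := (1 / 80 : ℝ)) (by norm_num)
  refine h.congr fun w _ => ?_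
  simp only [hingeLoss_eq_inner, Pi.add_apply, smul_eq_mul]
  ring

lemma hasGradientAt_hingeLoss (θ₁ θ₂ : ℝ) (w : Euc 2) :
    HasGradientAt (hingeLoss θ₁ θ₂)
      (toE2 (((w 0 - θ₁)⁺ - (θ₂ - w 0 - w 1)⁺) / 40) (-((θ₂ - w 0 - w 1)⁺ + (θ₂ - w 1)⁺) / 40))
      w := by
  have h := (((hasFDerivAt_posPart_inner_add_sq (toE2 (-1) (-1)) θ₂ w).add
    (hasFDerivAt_posPart_inner_add_sq (toE2 1 0) (-θ₁) w)).add
    (hasFDerivAt_posPart_inner_add_sq (toE2 0 (-1)) θ₂ w)).const_mul (1 / 80)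
  rw [hasGradientAt_iff_hasFDerivAt]
  refine (h.congr_fderiv ?_).congr_of_eventuallyEq (Filter.Eventually.of_forall fun v => ?_)
  · ext v
    simp [inner_toE2]
    ring_nf
  · simp only [hingeLoss_eq_inner, Pi.add_apply]
    ring

lemma gradient_hingeLoss (θ₁ θ₂ : ℝ) (w : Euc 2) : gradient (hingeLoss θ₁ θ₂) w =
    toE2 (((w 0 - θ₁)⁺ - (θ₂ - w 0 - w 1)⁺) / 40) (-((θ₂ - w 0 - w 1)⁺ + (θ₂ - w 1)⁺) / 40) :=
  (hasGradientAt_hingeLoss θ₁ θ₂ w).gradient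

lemma norm_gradient_hingeLoss_le {θ₁ θ₂ : ℝ} (h₁ : |θ₁| ≤ 1) (h₂ : |θ₂| ≤ 1) {w : Euc 2}
    (hw : ‖w‖ ≤ 5) : ‖gradient (hingeLoss θ₁ θ₂) w‖ ≤ 1 := by
  have hw₀ := (abs_apply_le_norm w 0).trans hw
  have hw₁ := (abs_apply_le_norm w 1).trans hw
  rw [abs_le] at h₁ h₂ hw₀ hw₁
  have hA : (w 0 - θ₁)⁺ ≤ 6 := max_le (by linarith) (by norm_num)
  have hV : (θ₂ - w 0 - w 1)⁺ ≤ 11 := max_le (by linarith) (by norm_num)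
  have hU : (θ₂ - w 1)⁺ ≤ 6 := max_le (by linarith) (by norm_num)
  have hA₀ := posPart_nonneg (w 0 - θ₁)
  have hV₀ := posPart_nonneg (θ₂ - w 0 - w 1)
  refine (norm_le_abs_add_abs _).trans ?_
  simp only [gradient_hingeLoss, toE2_apply_zero, toE2_apply_one]
  rw [abs_div, abs_div, abs_neg, abs_of_nonneg (by positivity : (0 : ℝ) ≤ _ + _),
    abs_of_pos (by norm_num : (0 : ℝ) < 40)]
  have := abs_sub (w 0 - θ₁)⁺ (θ₂ - w 0 - w 1)⁺
  rw [abs_of_nonneg hA₀, abs_of_nonneg hV₀] at this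
  linarith

lemma lipschitzOnWith_hingeLoss {θ₁ θ₂ : ℝ} (h₁ : |θ₁| ≤ 1) (h₂ : |θ₂| ≤ 1) :
    LipschitzOnWith 1 (hingeLoss θ₁ θ₂) (closedBall 0 5) := by
  refine (convex_closedBall 0 5).lipschitzOnWith_of_nnnorm_hasFDerivWithin_le
    (f' := fun w => InnerProductSpace.toDual ℝ (Euc 2) (gradient (hingeLoss θ₁ θ₂) w))
    (fun w _ => ?_) (fun w hw => ?_)
  · rw [gradient_hingeLoss]
    exact (hasGradientAt_iff_hasFDerivAt.1 (hasGradientAt_hingeLoss θ₁ θ₂ w)).hasFDerivWithinAt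
  · rw [LinearIsometryEquiv.nnnorm_map, ← NNReal.coe_le_coe, coe_nnnorm, NNReal.coe_one]
    exact norm_gradient_hingeLoss_le h₁ h₂ (mem_closedBall_zero_iff.1 hw)

lemma lipschitzWith_gradient_hingeLoss (θ₁ θ₂ : ℝ) :
    LipschitzWith 1 (gradient (hingeLoss θ₁ θ₂)) := by
  refine LipschitzWith.of_dist_le_mul fun x y => ?_
  rw [dist_eq_norm, dist_eq_norm, NNReal.coe_one, one_mul]
  have h₀ := abs_apply_le_norm (x - y) 0
  have h₁ := abs_apply_le_norm (x - y) 1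
  rw [PiLp.sub_apply] at h₀ h₁
  have hA : |(x 0 - θ₁)⁺ - (y 0 - θ₁)⁺| ≤ ‖x - y‖ := (abs_posPart_sub_posPart_le _ _).trans
    (by rwa [sub_sub_sub_cancel_right])
  have hV : |(θ₂ - x 0 - x 1)⁺ - (θ₂ - y 0 - y 1)⁺| ≤ 2 * ‖x - y‖ :=
    (abs_posPart_sub_posPart_le _ _).trans (by
      rw [show θ₂ - x 0 - x 1 - (θ₂ - y 0 - y 1) = -((x 0 - y 0) + (x 1 - y 1)) by ring, abs_neg]
      linarith [abs_add_le (x 0 - y 0) (x 1 - y 1)])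
  have hU : |(θ₂ - x 1)⁺ - (θ₂ - y 1)⁺| ≤ ‖x - y‖ := (abs_posPart_sub_posPart_le _ _).trans
    (by rwa [sub_sub_sub_cancel_left, abs_sub_comm])
  rw [abs_le] at hA hV hU
  refine (norm_le_abs_add_abs _).trans ?_
  simp only [gradient_hingeLoss, PiLp.sub_apply, toE2_apply_zero, toE2_apply_one]
  have e₀ : |((x 0 - θ₁)⁺ - (θ₂ - x 0 - x 1)⁺) / 40 - ((y 0 - θ₁)⁺ - (θ₂ - y 0 - y 1)⁺) / 40|
      ≤ 3 / 40 * ‖x - y‖ := abs_le.2 ⟨by linarith, by linarith⟩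
  have e₁ : |-((θ₂ - x 0 - x 1)⁺ + (θ₂ - x 1)⁺) / 40 - -((θ₂ - y 0 - y 1)⁺ + (θ₂ - y 1)⁺) / 40|
      ≤ 3 / 40 * ‖x - y‖ := abs_le.2 ⟨by linarith, by linarith⟩
  linarith [norm_nonneg (x - y)]
def hingeStep (θ₁ θ₂ ε : ℝ) (w : Euc 2) : Euc 2 :=
  toE2 (w 0 + ε * ((θ₂ - w 0 - w 1)⁺ - (w 0 - θ₁)⁺)) (w 1 + ε * ((θ₂ - w 0 - w 1)⁺ + (θ₂ - w 1)⁺))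

lemma sub_smul_gradient_hingeLoss (θ₁ θ₂ η : ℝ) (w : Euc 2) :
    w - η • gradient (hingeLoss θ₁ θ₂) w = hingeStep θ₁ θ₂ (η / 40) w := by
  ext i
  fin_cases i <;> simp [gradient_hingeLoss, hingeStep] <;> ring

def hingeBox (θ₁ θ₂ : ℝ) : Set (Euc 2) := {w | 0 ≤ w 0 ∧ w 0 ≤ θ₁ + θ₂ ∧ 0 ≤ w 1 ∧ w 1 ≤ θ₂}

lemma zero_mem_hingeBox {θ₁ θ₂ : ℝ} (hθ₁ : 0 ≤ θ₁) (hθ₂ : 0 ≤ θ₂) :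
    (0 : Euc 2) ∈ hingeBox θ₁ θ₂ :=
  ⟨le_rfl, by simpa using add_nonneg hθ₁ hθ₂, le_rfl, by simpa using hθ₂⟩

lemma hingeBox_subset_closedBall {θ₁ θ₂ : ℝ} (h₁ : θ₁ ≤ 1) (h₂ : θ₂ ≤ 1) :
    hingeBox θ₁ θ₂ ⊆ closedBall 0 5 := by
  rintro w ⟨hx₀, hx₁, hy₀, hy₁⟩
  rw [mem_closedBall_zero_iff]
  refine (norm_le_abs_add_abs w).trans ?_
  rw [abs_of_nonneg hx₀, abs_of_nonneg hy₀]
  linarith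

section HingeStep

variable {θ₁ θ₂ ε : ℝ} {w : Euc 2}

@[simp] lemma hingeStep_apply_zero :
    hingeStep θ₁ θ₂ ε w 0 = w 0 + ε * ((θ₂ - w 0 - w 1)⁺ - (w 0 - θ₁)⁺) := rfl

@[simp] lemma hingeStep_apply_one :
    hingeStep θ₁ θ₂ ε w 1 = w 1 + ε * ((θ₂ - w 0 - w 1)⁺ + (θ₂ - w 1)⁺) := rfl

lemma hingeStep_mem_hingeBox (hθ₁ : 0 ≤ θ₁) (hε₀ : 0 ≤ ε) (hε : ε ≤ 1 / 2)
    (hw : w ∈ hingeBox θ₁ θ₂) : hingeStep θ₁ θ₂ ε w ∈ hingeBox θ₁ θ₂ := by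
  obtain ⟨hx₀, hx₁, hy₀, hy₁⟩ := hw
  have hU : (θ₂ - w 1)⁺ = θ₂ - w 1 := posPart_of_nonneg (by linarith)
  have hV₀ := posPart_nonneg (θ₂ - w 0 - w 1)
  have hVU : (θ₂ - w 0 - w 1)⁺ ≤ θ₂ - w 1 := max_le (by linarith) (by linarith)
  have hA₀ := posPart_nonneg (w 0 - θ₁)
  have hA₁ := le_posPart (w 0 - θ₁)
  have hAx : (w 0 - θ₁)⁺ ≤ w 0 := max_le (by linarith) hx₀
  simp only [hingeBox, Set.mem_ofPred_eq, hingeStep_apply_zero, hingeStep_apply_one, hU]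
  exact ⟨by nlinarith, by nlinarith, by nlinarith, by nlinarith⟩

lemma sub_hingeStep_apply_one_ge (hε₀ : 0 ≤ ε) (hw : w ∈ hingeBox θ₁ θ₂) :
    (1 - 2 * ε) * (θ₂ - w 1) ≤ θ₂ - hingeStep θ₁ θ₂ ε w 1 := by
  obtain ⟨hx₀, -, -, hy₁⟩ := hw
  have hU : (θ₂ - w 1)⁺ = θ₂ - w 1 := posPart_of_nonneg (by linarith)
  have hVU : (θ₂ - w 0 - w 1)⁺ ≤ θ₂ - w 1 := max_le (by linarith) (by linarith)
  rw [hingeStep_apply_one, hU]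
  nlinarith

lemma le_hingeStep_apply_zero (hε₀ : 0 ≤ ε) (hε : ε ≤ 1) (h : θ₁ ≤ w 0) :
    θ₁ ≤ hingeStep θ₁ θ₂ ε w 0 := by
  rw [hingeStep_apply_zero, posPart_of_nonneg (sub_nonneg.2 h)]
  nlinarith [posPart_nonneg (θ₂ - w 0 - w 1)]

lemma hingeStep_apply_zero_ge (hε₀ : 0 ≤ ε) (h : w 0 ≤ θ₁) :
    w 0 + ε * (θ₂ - w 1 - θ₁) ≤ hingeStep θ₁ θ₂ ε w 0 := by
  rw [hingeStep_apply_zero, posPart_of_nonpos (sub_nonpos.2 h)]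
  nlinarith [le_posPart (θ₂ - w 0 - w 1)]

lemma hingeStep_dist_eq (h₀ : θ₁ ≤ w 0) (h₁ : w 1 ≤ θ₂) :
    (hingeStep θ₁ θ₂ ε w 0 - θ₁) + (θ₂ - hingeStep θ₁ θ₂ ε w 1)
      = (1 - ε) * ((w 0 - θ₁) + (θ₂ - w 1)) := by
  rw [hingeStep_apply_zero, hingeStep_apply_one, posPart_of_nonneg (sub_nonneg.2 h₀),
    posPart_of_nonneg (sub_nonneg.2 h₁)]
  ring

end HingeStep

def hingeOrbit (θ₁ θ₂ ε : ℝ) (t : ℕ) : Euc 2 := (hingeStep θ₁ θ₂ ε)^[t] 0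

section HingeOrbit

variable {θ₁ θ₂ ε : ℝ}

@[simp] lemma hingeOrbit_zero : hingeOrbit θ₁ θ₂ ε 0 = 0 := rfl

lemma hingeOrbit_succ (t : ℕ) :
    hingeOrbit θ₁ θ₂ ε (t + 1) = hingeStep θ₁ θ₂ ε (hingeOrbit θ₁ θ₂ ε t) :=
  Function.iterate_succ_apply' _ _ _

lemma hingeOrbit_mem_hingeBox (hθ₁ : 0 ≤ θ₁) (hθ₂ : 0 ≤ θ₂) (hε₀ : 0 ≤ ε) (hε : ε ≤ 1 / 2)
    (t : ℕ) : hingeOrbit θ₁ θ₂ ε t ∈ hingeBox θ₁ θ₂ :=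
  Set.MapsTo.iterate (fun _ hw => hingeStep_mem_hingeBox hθ₁ hε₀ hε hw) t
    (zero_mem_hingeBox hθ₁ hθ₂)

lemma pow_mul_le_sub_hingeOrbit_apply_one (hθ₁ : 0 ≤ θ₁) (hθ₂ : 0 ≤ θ₂) (hε₀ : 0 ≤ ε)
    (hε : ε ≤ 1 / 2) (t : ℕ) : (1 - 2 * ε) ^ t * θ₂ ≤ θ₂ - hingeOrbit θ₁ θ₂ ε t 1 := by
  induction t with
  | zero => simp
  | succ t ih =>
    rw [hingeOrbit_succ, pow_succ', mul_assoc]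
    exact (mul_le_mul_of_nonneg_left ih (by linarith)).trans
      (sub_hingeStep_apply_one_ge hε₀ (hingeOrbit_mem_hingeBox hθ₁ hθ₂ hε₀ hε t))

lemma le_hingeOrbit_add_apply_zero (hε₀ : 0 ≤ ε) (hε : ε ≤ 1) {s : ℕ}
    (hs : θ₁ ≤ hingeOrbit θ₁ θ₂ ε s 0) (k : ℕ) : θ₁ ≤ hingeOrbit θ₁ θ₂ ε (s + k) 0 := by
  induction k with
  | zero => exact hs
  | succ k ih => rw [← add_assoc, hingeOrbit_succ]; exact le_hingeStep_apply_zero hε₀ hε ih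

lemma hingeOrbit_add_dist_eq (hθ₁ : 0 ≤ θ₁) (hθ₂ : 0 ≤ θ₂) (hε₀ : 0 ≤ ε) (hε : ε ≤ 1 / 2)
    {s : ℕ} (hs : θ₁ ≤ hingeOrbit θ₁ θ₂ ε s 0) (k : ℕ) :
    (hingeOrbit θ₁ θ₂ ε (s + k) 0 - θ₁) + (θ₂ - hingeOrbit θ₁ θ₂ ε (s + k) 1)
      = (1 - ε) ^ k * ((hingeOrbit θ₁ θ₂ ε s 0 - θ₁) + (θ₂ - hingeOrbit θ₁ θ₂ ε s 1)) := by
  induction k with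
  | zero => simp
  | succ k ih =>
    rw [← add_assoc, hingeOrbit_succ, hingeStep_dist_eq
      (le_hingeOrbit_add_apply_zero hε₀ (by linarith) hs k)
      (hingeOrbit_mem_hingeBox hθ₁ hθ₂ hε₀ hε _).2.2.2, ih, pow_succ']
    ring

lemma min_le_hingeOrbit_apply_zero (hθ₁ : 0 ≤ θ₁) (hθ₁₂ : 4 * θ₁ ≤ θ₂) (hε₀ : 0 ≤ ε)
    (hε : ε ≤ 1 / 2) (t : ℕ) (ht : 4 * ε * (t - 1) ≤ 1) :
    min θ₁ (ε * t * θ₂ / 4) ≤ hingeOrbit θ₁ θ₂ ε t 0 := by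
  have hθ₂ : 0 ≤ θ₂ := by linarith
  induction t with
  | zero => simp
  | succ t ih =>
    push_cast at ht
    rw [add_sub_cancel_right] at ht
    rw [hingeOrbit_succ]
    rcases le_or_gt θ₁ (hingeOrbit θ₁ θ₂ ε t 0) with habs | hlow
    · exact (min_le_left _ _).trans (le_hingeStep_apply_zero hε₀ (by linarith) habs)
    · have hx : ε * t * θ₂ / 4 ≤ hingeOrbit θ₁ θ₂ ε t 0 :=
        (min_le_iff.1 (ih (by nlinarith))).resolve_left hlow.not_ge
      have hpow : 1 - 2 * ε * t ≤ (1 - 2 * ε) ^ t := by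
        have := one_add_mul_le_pow (show (-2 : ℝ) ≤ -(2 * ε) by linarith) t
        rw [← sub_eq_add_neg] at this
        linarith
      have hy : θ₂ / 2 ≤ θ₂ - hingeOrbit θ₁ θ₂ ε t 1 := by
        nlinarith [pow_mul_le_sub_hingeOrbit_apply_one hθ₁ hθ₂ hε₀ hε t]
      refine (min_le_right _ _).trans (le_trans ?_ (hingeStep_apply_zero_ge hε₀ hlow.le))
      push_cast
      nlinarith

lemma le_hingeOrbit_apply_zero (hθ₁ : 0 ≤ θ₁) (hθ₁₂ : 16 * θ₁ ≤ θ₂) (hε₀ : 0 ≤ ε)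
    (hε : ε ≤ 1 / 2) {τ t : ℕ} (hτ₁ : 1 ≤ 4 * ε * τ) (hτ₂ : 4 * ε * (τ - 1) ≤ 1) (ht : τ ≤ t) :
    θ₁ ≤ hingeOrbit θ₁ θ₂ ε t 0 := by
  obtain ⟨k, rfl⟩ := Nat.exists_eq_add_of_le ht
  refine le_hingeOrbit_add_apply_zero hε₀ (by linarith) ?_ k
  have h := min_le_hingeOrbit_apply_zero (θ₂ := θ₂) hθ₁ (by linarith) hε₀ hε τ hτ₂
  rwa [min_eq_left (show θ₁ ≤ ε * τ * θ₂ / 4 by nlinarith)] at h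

lemma norm_hingeOrbit_sub_le (hθ₁ : 0 ≤ θ₁) (hθ₁₂ : 16 * θ₁ ≤ θ₂) (hθ₂ : θ₂ ≤ 1)
    (hε₀ : 0 ≤ ε) (hε : ε ≤ 1 / 2) {τ : ℕ} (hτ₁ : 1 ≤ 4 * ε * τ) (hτ₂ : 4 * ε * (τ - 1) ≤ 1)
    (t : ℕ) : ‖hingeOrbit θ₁ θ₂ ε t - toE2 θ₁ θ₂‖ ≤ 2 * (1 - ε) ^ (t - τ) := by
  have hθ₂₀ : 0 ≤ θ₂ := by linarith
  obtain ⟨hx₀, hx₁, hy₀, hy₁⟩ := hingeOrbit_mem_hingeBox hθ₁ hθ₂₀ hε₀ hε t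
  refine (norm_le_abs_add_abs _).trans ?_
  simp only [PiLp.sub_apply, toE2_apply_zero, toE2_apply_one]
  rw [abs_sub_comm _ θ₂, abs_of_nonneg (sub_nonneg.2 hy₁)]
  rcases lt_or_ge t τ with ht | ht
  · rw [Nat.sub_eq_zero_of_le ht.le, pow_zero, mul_one]
    have : |hingeOrbit θ₁ θ₂ ε t 0 - θ₁| ≤ 1 := abs_le.2 ⟨by linarith, by linarith⟩
    linarith
  · obtain ⟨k, rfl⟩ := Nat.exists_eq_add_of_le ht
    have hτ := le_hingeOrbit_apply_zero hθ₁ hθ₁₂ hε₀ hε hτ₁ hτ₂ le_rfl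
    obtain ⟨-, hτx, hτy₀, hτy⟩ := hingeOrbit_mem_hingeBox hθ₁ hθ₂₀ hε₀ hε τ
    rw [abs_of_nonneg (sub_nonneg.2 (le_hingeOrbit_add_apply_zero hε₀ (by linarith) hτ k)),
      hingeOrbit_add_dist_eq hθ₁ hθ₂₀ hε₀ hε hτ k, Nat.add_sub_cancel_left]
    nlinarith [pow_nonneg (show 0 ≤ 1 - ε by linarith) k]

end HingeOrbit

lemma norm_avg_hingeOrbit_sub_le {θ₁ θ₂ ε : ℝ} (hθ₁ : 0 ≤ θ₁) (hθ₁₂ : 16 * θ₁ ≤ θ₂)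
    (hθ₂ : θ₂ ≤ 1) (hε₀ : 0 < ε) (hε : ε ≤ 1 / 4) {T : ℕ} (hT : T ≠ 0) :
    ‖(T : ℝ)⁻¹ • ∑ t ∈ range T, hingeOrbit θ₁ θ₂ ε t - toE2 θ₁ θ₂‖ ≤ 3 / (ε * T) := by
  set a := (4 * ε)⁻¹
  have ha : 4 * ε * a = 1 := mul_inv_cancel₀ (by positivity)
  set τ := ⌈a⌉₊
  have hτ₁ : a ≤ τ := Nat.le_ceil a
  have hτ₂ : (τ : ℝ) < a + 1 := Nat.ceil_lt_add_one (by positivity)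
  have hεa : ε⁻¹ = 4 * a := by simp only [a, mul_inv]; ring
  have h1a : 1 ≤ a := by rw [one_le_inv₀ (by positivity)]; linarith
  calc ‖(T : ℝ)⁻¹ • ∑ t ∈ range T, hingeOrbit θ₁ θ₂ ε t - toE2 θ₁ θ₂‖
      ≤ (T : ℝ)⁻¹ * ∑ t ∈ range T, ‖hingeOrbit θ₁ θ₂ ε t - toE2 θ₁ θ₂‖ :=
        norm_inv_smul_sum_sub_le _ _ hT
    _ ≤ (T : ℝ)⁻¹ * ∑ t ∈ range T, 2 * (1 - ε) ^ (t - τ) := by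
        gcongr with t
        exact norm_hingeOrbit_sub_le hθ₁ hθ₁₂ hθ₂ hε₀.le (by linarith) (by nlinarith)
          (by nlinarith) t
    _ ≤ (T : ℝ)⁻¹ * (2 * (τ + (1 - (1 - ε))⁻¹)) := by
        rw [← mul_sum]
        gcongr
        exact sum_range_pow_sub_le (by linarith) (by linarith) τ T
    _ ≤ 3 / (ε * T) := by
        rw [sub_sub_cancel, div_eq_mul_inv, mul_inv, hεa]
        nlinarith [mul_nonneg (inv_nonneg.2 (Nat.cast_nonneg T)) (show 0 ≤ 2 * a - τ by linarith)]

theorem stmt5 (θ₁ θ₂ : ℝ) (hθ₂pos : 0 < θ₂) (hθ₂le : θ₂ ≤ 1)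
    (hθ₁pos : 0 < θ₁) (hθ₁le : θ₁ ≤ 0.025 * θ₂) :
    ∃ F : Euc 2 → ℝ,
      (∀ w ∈ closedBall (0 : Euc 2) 5, 0 ≤ F w) ∧
      ConvexOn ℝ (closedBall 0 5) F ∧
      LipschitzOnWith 1 F (closedBall 0 5) ∧
      LipschitzOnWith 1 (fun w => gradient F w) (closedBall 0 5) ∧
      F (toE2 0 θ₂) = 0 ∧ F (toE2 θ₁ θ₂) = 0 ∧
      ∀ (T : ℕ) (η : ℝ), 0 < T → 0 < η → η < 1 →
        ‖gdOut F η T - toE2 θ₁ θ₂‖ ≤ 2640 / (η * T) := by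
  have hθ₁₂ : 16 * θ₁ ≤ θ₂ := by norm_num at hθ₁le; linarith
  refine ⟨hingeLoss θ₁ θ₂, fun w _ => hingeLoss_nonneg θ₁ θ₂ w,
    (convexOn_hingeLoss θ₁ θ₂).subset (Set.subset_univ _) (convex_closedBall 0 5),
    lipschitzOnWith_hingeLoss (abs_le.2 ⟨by linarith, by linarith⟩)
      (abs_le.2 ⟨by linarith, hθ₂le⟩),
    (lipschitzWith_gradient_hingeLoss θ₁ θ₂).lipschitzOnWith,
    hingeLoss_toE2_eq_zero le_rfl hθ₁pos.le, hingeLoss_toE2_eq_zero hθ₁pos.le le_rfl,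
    fun T η hT hη hη₁ => ?_⟩
  have hstep : (fun w => w - η • gradient (hingeLoss θ₁ θ₂) w) = hingeStep θ₁ θ₂ (η / 40) :=
    funext (sub_smul_gradient_hingeLoss θ₁ θ₂ η)
  have hmaps : Set.MapsTo (fun w => w - η • gradient (hingeLoss θ₁ θ₂) w)
      (hingeBox θ₁ θ₂) (hingeBox θ₁ θ₂) := by
    rw [hstep]
    exact fun w hw => hingeStep_mem_hingeBox hθ₁pos.le (by positivity) (by linarith) hw
  have hiter (t : ℕ) : gdIter 5 η (fun _ => gradient (hingeLoss θ₁ θ₂)) t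
      = hingeOrbit θ₁ θ₂ (η / 40) t := by
    rw [gdIter_eq_iterate (zero_mem_hingeBox hθ₁pos.le hθ₂pos.le)
      (hingeBox_subset_closedBall (by linarith) hθ₂le) hmaps, hstep]
    rfl
  calc ‖gdOut (hingeLoss θ₁ θ₂) η T - toE2 θ₁ θ₂‖
      = ‖(T : ℝ)⁻¹ • ∑ t ∈ range T, hingeOrbit θ₁ θ₂ (η / 40) t - toE2 θ₁ θ₂‖ := by
        simp only [gdOut, gdAvg, ← hiter]
    _ ≤ 3 / (η / 40 * T) :=
        norm_avg_hingeOrbit_sub_le hθ₁pos.le hθ₁₂ hθ₂le (by positivity) (by linarith) hT.ne'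
    _ ≤ 2640 / (η * T) := by
        rw [show η / 40 * T = η * T / 40 by ring, div_div_eq_mul_div]
        gcongr
        norm_num

end
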